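/- arXiv:2605.07858 — 3 statements merged into one kernel-verified Lean document; each statement's English description precedes it below -/
import Mathlib

section
/- The projection functor ls : LS(C) → C sending (X, A) to X and (f, u) to f is a split Grothendieck fibration, where the chosen cartesian lift of f : X → Y at (Y, B) is (f, w_X ⊗ id_B) : (X, B) → (Y, B). -/
/-!
STATEMENT 3: The projection functor `ls : LS(C) → C` sending `(X, A)` to `X` and
`(f, u)` to `f` is a split Grothendieck fibration, where the chosen cartesian lift of
`f : X ⟶ Y` at `(Y, B)` is `(f, w_X ⊗ id_B) : (X, B) ⟶ (Y, B)`.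
-/

open CategoryTheory MonoidalCategory CategoryTheory.CartesianMonoidalCategory

universe v u v' u'

variable {C : Type u} [Category.{v} C] [CartesianMonoidalCategory C]
  {L : Type u'} [Category.{v'} L] [MonoidalCategory L] [SymmetricCategory L]

/-- The diagonal morphism of the cartesian structure. -/
abbrev diag (X : C) : X ⟶ X ⊗ X := lift (𝟙 X) (𝟙 X)

/-- Contraction `c_X := F(Δ_X) ≫ m⁻¹` on `F(X)`. -/
def con (F : C ⥤ L) [F.Monoidal] (X : C) : F.obj X ⟶ F.obj X ⊗ F.obj X :=
  F.map (diag X) ≫ Functor.OplaxMonoidal.δ F X X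

/-- Weakening `w_X := F(I_X) ≫ m_I⁻¹` on `F(X)`. -/
def weak (F : C ⥤ L) [F.Monoidal] (X : C) : F.obj X ⟶ 𝟙_ L :=
  F.map (toUnit X) ≫ Functor.OplaxMonoidal.η F

variable (F : C ⥤ L) [F.Monoidal]

/-- Morphisms of the linear simple category `LS(C)`: a morphism `(X,A) ⟶ (Y,B)` is a
pair of `f : X ⟶ Y` in `C` and `u : F(X) ⊗ A ⟶ B` in `L`. -/
structure LSHom (P Q : C × L) where
  base : P.1 ⟶ Q.1
  fib : F.obj P.1 ⊗ P.2 ⟶ Q.2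

variable {F}

/-- Composition in the linear simple category:
`(f,u);(g,v) = (f ≫ g, (c ⊗ id) ≫ (F f ⊗ u) ≫ v)`. -/
def LSHom.comp {P Q R : C × L} (f : LSHom F P Q) (g : LSHom F Q R) : LSHom F P R where
  base := f.base ≫ g.base
  fib := (con F P.1 ▷ P.2) ≫ (α_ (F.obj P.1) (F.obj P.1) P.2).hom ≫
    (F.map f.base ⊗ₘ f.fib) ≫ g.fib

/-- Identities in the linear simple category: `(id_X, w_X ⊗ id_A)`. -/
def LSHom.id (P : C × L) : LSHom F P P where
  base := 𝟙 P.1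
  fib := (weak F P.1 ▷ P.2) ≫ (λ_ P.2).hom

/-- The chosen cartesian lift of `f : X ⟶ Y` at `(Y, B)`, namely `(f, w_X ⊗ id_B)`. -/
def LSlift {X Y : C} (f : X ⟶ Y) (B : L) : LSHom F ((X, B) : C × L) (Y, B) where
  base := f
  fib := (weak F X ▷ B) ≫ (λ_ B).hom

set_option linter.unusedSectionVars false

/-- Naturality of weakening. -/
lemma weak_natural {X Y : C} (f : X ⟶ Y) : F.map f ≫ weak F Y = weak F X := by
  rw [weak, weak, ← F.map_comp_assoc, toUnit_unique (f ≫ toUnit Y) (toUnit X)]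

lemma diag_counit (X : C) : diag X ≫ toUnit X ▷ X = (λ_ X).inv := by
  apply hom_ext
  · apply toUnit_unique
  · simp

/-- Counit law for the comonoid structure on `F X`. -/
lemma con_weak (X : C) :
    con F X ≫ weak F X ▷ F.obj X ≫ (λ_ (F.obj X)).hom = 𝟙 (F.obj X) := by
  rw [con, weak, comp_whiskerRight, Category.assoc, Category.assoc,
    Functor.OplaxMonoidal.δ_natural_left_assoc, Functor.OplaxMonoidal.left_unitality_hom,
    ← F.map_comp_assoc, ← F.map_comp, diag_counit, Iso.inv_hom_id, F.map_id]

/-- Extensionality for `LSHom`. -/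
lemma LSHom.ext {P Q : C × L} {h k : LSHom F P Q} (hb : h.base = k.base)
    (hf : h.fib = k.fib) : h = k := by
  cases h; cases k; cases hb; cases hf; rfl

/-- Composing with a chosen lift does not change the fibre part. -/
lemma comp_LSlift_fib {Z : C × L} {X Y : C} (f : X ⟶ Y) (B : L)
    (h : LSHom F Z ((X, B) : C × L)) : (h.comp (LSlift f B)).fib = h.fib := by
  show (con F Z.1 ▷ Z.2) ≫ (α_ _ _ _).hom ≫
      (F.map h.base ⊗ₘ h.fib) ≫ (weak F X ▷ B) ≫ (λ_ B).hom = h.fib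
  rw [tensorHom_def', Category.assoc, ← comp_whiskerRight_assoc, weak_natural,
    whisker_exchange_assoc, MonoidalCategory.leftUnitor_naturality, leftUnitor_tensor_hom,
    ← associator_naturality_left_assoc]
  slice_lhs 3 4 => rw [Iso.hom_inv_id]
  rw [Category.id_comp, ← comp_whiskerRight_assoc, ← comp_whiskerRight_assoc,
    Category.assoc, con_weak, id_whiskerRight, Category.id_comp]

/-- the projection `ls : LS(C) → C`, `(X,A) ↦ X`, `(f,u) ↦ f`, is a split
Grothendieck fibration: every chosen lift `(f, w_X ⊗ id_B)` is cartesian over `f`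
(any morphism into `(Y,B)` whose projection factors through `f` factors uniquely,
over the factorisation, through the chosen lift), and the cleavage is split
(chosen lifts of identities are identities and chosen lifts compose). -/

theorem ls_split_fibration (U : L ⥤ C) (adj : F ⊣ U) :
    (∀ (X Y : C) (B : L) (f : X ⟶ Y) (Z : C × L) (g : LSHom F Z (Y, B))
      (w : Z.1 ⟶ X), g.base = w ≫ f →
      ∃! h : LSHom F Z ((X, B) : C × L),
        h.base = w ∧ h.comp (LSlift f B) = g) ∧
    (∀ (X : C) (B : L), LSlift (F := F) (𝟙 X) B = LSHom.id ((X, B) : C × L)) ∧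
    (∀ (X Y Z : C) (f : X ⟶ Y) (g : Y ⟶ Z) (B : L),
      (LSlift (F := F) f B).comp (LSlift g B) = LSlift (f ≫ g) B) := by
  refine ⟨fun X Y B f Z g w hw => ?_, fun X B => rfl, fun X Y Z f g B => ?_⟩
  · refine ⟨⟨w, g.fib⟩, ⟨rfl, ?_⟩, ?_⟩
    · refine LSHom.ext ?_ ?_
      · simpa [LSHom.comp, LSlift] using hw.symm
      · exact comp_LSlift_fib f B ⟨w, g.fib⟩
    · rintro k ⟨hb, hcomp⟩
      refine LSHom.ext hb ?_
      have := congrArg LSHom.fib hcomp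
      rw [comp_LSlift_fib] at this
      exact this
  · refine LSHom.ext rfl ?_
    exact comp_LSlift_fib g B (LSlift f B)
end

section
/- The assignment U^S(X, A) = (X, U A) and U^S(f, u) = (f, (η_X × id_{U A}); n_{F X, A}; U(u)) defines a functor U^S : LS(C) → S(C), and U^S is a split fibred functor from ls to the simple fibration s. -/
/-!
STATEMENT 6: The assignment `U^S(X, A) = (X, U A)`,
`U^S(f, u) = (f, (η_X × id) ≫ n_{F X, A} ≫ U(u))` defines a functor
`U^S : LS(C) → S(C)`, and `U^S` is a split fibred functor from `ls` to the simple
fibration `s`.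
-/

open CategoryTheory MonoidalCategory CategoryTheory.CartesianMonoidalCategory

universe v u v' u'

variable {C : Type u} [Category.{v} C] [CartesianMonoidalCategory C]
  {L : Type u'} [Category.{v'} L] [MonoidalCategory L] [SymmetricCategory L]

variable (F : C ⥤ L) [F.Monoidal]

variable {F}

/-- Morphisms of the simple category `S(C)`: a morphism `(X,J) ⟶ (Y,K)` is a pair of
`f : X ⟶ Y` and `u : X × J ⟶ K`. -/
structure SHom (P Q : C × C) where
  base : P.1 ⟶ Q.1
  fib : P.1 ⊗ P.2 ⟶ Q.2

/-- Composition in the simple category, using the diagonal. -/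
def SHom.comp {P Q R : C × C} (f : SHom P Q) (g : SHom Q R) : SHom P R where
  base := f.base ≫ g.base
  fib := (diag P.1 ▷ P.2) ≫ (α_ P.1 P.1 P.2).hom ≫ (f.base ⊗ₘ f.fib) ≫ g.fib

/-- Identities in the simple category: `(id_X, π_J)`. -/
def SHom.id (P : C × C) : SHom P P where
  base := 𝟙 P.1
  fib := snd P.1 P.2

/-- The chosen cartesian lift `(f, π_K)` of the simple fibration. -/
def Slift {X Y : C} (f : X ⟶ Y) (J : C) : SHom ((X, J) : C × C) (Y, J) where
  base := f
  fib := snd X J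

/-- The lax monoidal structure `n` on `U` obtained from the strong monoidal structure
on `F` by lax–colax duality. -/
def nMap (F : C ⥤ L) [F.Monoidal] (U : L ⥤ C) (adj : F ⊣ U) (A B : L) :
    U.obj A ⊗ U.obj B ⟶ U.obj (A ⊗ B) :=
  adj.unit.app (U.obj A ⊗ U.obj B) ≫
    U.map (Functor.OplaxMonoidal.δ F (U.obj A) (U.obj B) ≫
      (adj.counit.app A ⊗ₘ adj.counit.app B))

/-- `U^S` on objects: `(X, A) ↦ (X, U A)`. -/
def USobj (U : L ⥤ C) (P : C × L) : C × C := (P.1, U.obj P.2)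

/-- `U^S` on morphisms: `(f, u) ↦ (f, (η_X × id) ≫ n ≫ U(u))`. -/
def USmap (U : L ⥤ C) (adj : F ⊣ U) {P Q : C × L} (k : LSHom F P Q) :
    SHom (USobj U P) (USobj U Q) where
  base := k.base
  fib := (adj.unit.app P.1 ⊗ₘ 𝟙 (U.obj P.2)) ≫ nMap F U adj (F.obj P.1) P.2 ≫
    U.map k.fib


section Aux

open Functor.OplaxMonoidal

variable (F : C ⥤ L) [F.Monoidal]

lemma toUnit_whiskerRight_leftUnitor (X J : C) :
    (toUnit X ▷ J) ≫ (λ_ J).hom = snd X J := by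
  rw [← Iso.eq_comp_inv]
  apply hom_ext
  · apply toUnit_unique
  · simp [leftUnitor_inv_snd, whiskerRight_snd]

variable {F}

/-- Key simplification of the fiber part of `U^S`. -/
lemma USfib_eq (U : L ⥤ C) (adj : F ⊣ U) (X : C) {A B : L} (u : F.obj X ⊗ A ⟶ B) :
    (adj.unit.app X ⊗ₘ 𝟙 (U.obj A)) ≫ nMap F U adj (F.obj X) A ≫ U.map u =
    adj.unit.app (X ⊗ U.obj A) ≫
      U.map (δ F X (U.obj A) ≫ (F.obj X ◁ adj.counit.app A) ≫ u) := by
  have hnat := adj.unit.naturality (adj.unit.app X ⊗ₘ 𝟙 (U.obj A))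
  dsimp at hnat
  rw [nMap, ← Category.assoc, ← Category.assoc, hnat]
  simp only [Category.assoc, ← U.map_comp]
  congr 2
  have : F.map (adj.unit.app X ⊗ₘ 𝟙 (U.obj A)) ≫ δ F (U.obj (F.obj X)) (U.obj A) =
      δ F X (U.obj A) ≫ (F.map (adj.unit.app X) ⊗ₘ F.map (𝟙 (U.obj A))) :=
    (δ_natural F _ _).symm
  rw [reassoc_of% this]
  rw [F.map_id, tensorHom_comp_tensorHom_assoc, adj.left_triangle_components]
  simp [id_tensorHom]

/-- The fiber part of `U^S` of a weakening-style morphism is the projection. -/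
lemma USfib_weak (U : L ⥤ C) (adj : F ⊣ U) (X : C) (B : L) :
    adj.unit.app (X ⊗ U.obj B) ≫
      U.map (δ F X (U.obj B) ≫ (F.obj X ◁ adj.counit.app B) ≫
        ((weak F X ▷ B) ≫ (λ_ B).hom)) = snd X (U.obj B) := by
  have h1 : (F.obj X ◁ adj.counit.app B) ≫ (weak F X ▷ B) =
      (weak F X ▷ F.obj (U.obj B)) ≫ (𝟙_ L ◁ adj.counit.app B) :=
    whisker_exchange _ _
  rw [reassoc_of% h1]
  rw [MonoidalCategory.leftUnitor_naturality]
  rw [weak, comp_whiskerRight, Category.assoc]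
  have h3 : δ F X (U.obj B) ≫ (F.map (toUnit X) ▷ F.obj (U.obj B)) =
      F.map (toUnit X ▷ U.obj B) ≫ δ F (𝟙_ C) (U.obj B) := δ_natural_left F _ _
  rw [reassoc_of% h3]
  rw [left_unitality_hom_assoc]
  rw [← F.map_comp_assoc, toUnit_whiskerRight_leftUnitor]
  rw [U.map_comp, ← Category.assoc]
  have h4 := adj.unit.naturality (snd X (U.obj B))
  dsimp at h4
  rw [← h4, Category.assoc, adj.right_triangle_components, Category.comp_id]

/-- The core monoidal identity used for compositionality. -/
lemma USfib_core (U : L ⥤ C) (adj : F ⊣ U) (X : C) (A : L) :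
    δ F X (U.obj A) ≫ (F.obj X ◁ adj.counit.app A) ≫ (con F X ▷ A) ≫
      (α_ (F.obj X) (F.obj X) A).hom =
    F.map (diag X ▷ U.obj A) ≫ F.map (α_ X X (U.obj A)).hom ≫
      δ F X (X ⊗ U.obj A) ≫ (F.obj X ◁ δ F X (U.obj A)) ≫
      (F.obj X ◁ (F.obj X ◁ adj.counit.app A)) := by
  rw [con, comp_whiskerRight]
  simp only [Category.assoc]
  have h1 : (F.obj X ◁ adj.counit.app A) ≫ (F.map (diag X) ▷ A) =
      (F.map (diag X) ▷ F.obj (U.obj A)) ≫ (F.obj (X ⊗ X) ◁ adj.counit.app A) :=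
    whisker_exchange _ _
  rw [reassoc_of% h1]
  have h2 : (F.obj (X ⊗ X) ◁ adj.counit.app A) ≫ (δ F X X ▷ A) =
      (δ F X X ▷ F.obj (U.obj A)) ≫ ((F.obj X ⊗ F.obj X) ◁ adj.counit.app A) :=
    whisker_exchange _ _
  rw [reassoc_of% h2]
  rw [associator_naturality_right]
  have h3 : δ F X (U.obj A) ≫ (F.map (diag X) ▷ F.obj (U.obj A)) =
      F.map (diag X ▷ U.obj A) ≫ δ F (X ⊗ X) (U.obj A) := δ_natural_left F _ _
  rw [reassoc_of% h3]
  rw [associativity_assoc]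

lemma USmap_fib (U : L ⥤ C) (adj : F ⊣ U) {P Q : C × L} (k : LSHom F P Q) :
    (USmap U adj k).fib = (adj.homEquiv (P.1 ⊗ U.obj P.2) Q.2)
      (δ F P.1 (U.obj P.2) ≫ (F.obj P.1 ◁ adj.counit.app P.2) ≫ k.fib) := by
  rw [Adjunction.homEquiv_unit]
  exact USfib_eq U adj P.1 k.fib

lemma SHom.ext' {P Q : C × C} {f g : SHom P Q} (h1 : f.base = g.base)
    (h2 : f.fib = g.fib) : f = g := by
  cases f; cases g; cases h1; cases h2; rfl

end Aux

/-- `U^S` is a functor and a split fibred functor from `ls` to `s`: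
it preserves identities, composition, lies over the identity on `C`, and preserves the
chosen cartesian lifts. -/
theorem US_split_fibred_functor (U : L ⥤ C) (adj : F ⊣ U) :
    (∀ P : C × L, USmap U adj (LSHom.id P) = SHom.id (USobj U P)) ∧
    (∀ (P Q R : C × L) (f : LSHom F P Q) (g : LSHom F Q R),
      USmap U adj (f.comp g) = (USmap U adj f).comp (USmap U adj g)) ∧
    (∀ (P Q : C × L) (f : LSHom F P Q), (USmap U adj f).base = f.base ∧
      (USobj U P).1 = P.1) ∧
    (∀ (X Y : C) (f : X ⟶ Y) (B : L),
      USmap U adj (LSlift f B) = Slift f (U.obj B)) := by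
  refine ⟨?_, ?_, fun P Q f => ⟨rfl, rfl⟩, ?_⟩
  · intro P
    refine SHom.ext' rfl ?_
    show (adj.unit.app P.1 ⊗ₘ 𝟙 (U.obj P.2)) ≫ nMap F U adj (F.obj P.1) P.2 ≫
      U.map (LSHom.id P).fib = (SHom.id (USobj U P)).fib
    rw [USfib_eq U adj P.1]
    exact USfib_weak U adj P.1 P.2
  · intro P Q R f g
    refine SHom.ext' rfl ?_
    rw [USmap_fib]
    show _ = (diag P.1 ▷ U.obj P.2) ≫ (α_ P.1 P.1 (U.obj P.2)).hom ≫
      (f.base ⊗ₘ (USmap U adj f).fib) ≫ (USmap U adj g).fib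
    rw [USmap_fib, USmap_fib]
    dsimp only [USobj]
    apply (adj.homEquiv (P.1 ⊗ U.obj P.2) R.2).symm.injective
    rw [Equiv.symm_apply_apply, Adjunction.homEquiv_naturality_left_symm,
      Adjunction.homEquiv_naturality_left_symm, Adjunction.homEquiv_naturality_left_symm]
    erw [Equiv.symm_apply_apply]
    rw [LSHom.comp]
    simp only [Category.assoc]
    have h5 : F.map (f.base ⊗ₘ (adj.homEquiv (P.1 ⊗ U.obj P.2) Q.2)
          (Functor.OplaxMonoidal.δ F P.1 (U.obj P.2) ≫
            (F.obj P.1 ◁ adj.counit.app P.2) ≫ f.fib)) ≫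
        Functor.OplaxMonoidal.δ F Q.1 (U.obj Q.2) =
        Functor.OplaxMonoidal.δ F P.1 (P.1 ⊗ U.obj P.2) ≫
          (F.map f.base ⊗ₘ F.map ((adj.homEquiv (P.1 ⊗ U.obj P.2) Q.2)
            (Functor.OplaxMonoidal.δ F P.1 (U.obj P.2) ≫
              (F.obj P.1 ◁ adj.counit.app P.2) ≫ f.fib))) :=
      (Functor.OplaxMonoidal.δ_natural F _ _).symm
    rw [reassoc_of% h5]
    have h6 : (F.map f.base ⊗ₘ F.map ((adj.homEquiv (P.1 ⊗ U.obj P.2) Q.2)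
          (Functor.OplaxMonoidal.δ F P.1 (U.obj P.2) ≫
            (F.obj P.1 ◁ adj.counit.app P.2) ≫ f.fib))) ≫
        (F.obj Q.1 ◁ adj.counit.app Q.2) =
        (F.map f.base ⊗ₘ Functor.OplaxMonoidal.δ F P.1 (U.obj P.2) ≫
          (F.obj P.1 ◁ adj.counit.app P.2) ≫ f.fib) := by
      simp only [← id_tensorHom, tensorHom_comp_tensorHom, Category.comp_id]
      congr 1
      have h7 := adj.homEquiv_counit (X := P.1 ⊗ U.obj P.2) (Y := Q.2)
        (g := (adj.homEquiv (P.1 ⊗ U.obj P.2) Q.2)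
          (Functor.OplaxMonoidal.δ F P.1 (U.obj P.2) ≫
            (𝟙 (F.obj P.1) ⊗ₘ adj.counit.app P.2) ≫ f.fib))
      rw [← h7, Equiv.symm_apply_apply]
    rw [reassoc_of% h6]
    have h8 : (F.map f.base ⊗ₘ Functor.OplaxMonoidal.δ F P.1 (U.obj P.2) ≫
          (F.obj P.1 ◁ adj.counit.app P.2) ≫ f.fib) =
        (F.obj P.1 ◁ (Functor.OplaxMonoidal.δ F P.1 (U.obj P.2) ≫
          (F.obj P.1 ◁ adj.counit.app P.2))) ≫ (F.map f.base ⊗ₘ f.fib) := by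
      simp only [← id_tensorHom, tensorHom_comp_tensorHom, Category.id_comp, Category.comp_id,
        Category.assoc]
    rw [reassoc_of% h8]
    simp only [MonoidalCategory.whiskerLeft_comp, Category.assoc]
    rw [← reassoc_of% (USfib_core U adj P.1 P.2)]
  · intro X Y f B
    refine SHom.ext' rfl ?_
    show (adj.unit.app X ⊗ₘ 𝟙 (U.obj B)) ≫ nMap F U adj (F.obj X) B ≫
      U.map (LSlift f B).fib = (Slift f (U.obj B)).fib
    rw [USfib_eq U adj X]
    exact USfib_weak U adj X B
end

section
/- For every u : (X,J) → (X,K) in the fibre S(C)_X and every v : (X×K, A) → (X×K, B) in the fibre LS(C)_{X×K}, one has Σ_{(X,J)}({u}*v); μ^{(X,J)}_{(X,A)} = (F^S(u) ⊗_X id_A); Σ_{(X,K)} v; μ^{(X,K)}_{(X,A)} as morphisms (X, F(J) ⊗ A) → (X, B). -/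
/-!
STATEMENT 14: For every `u : (X,J) ⟶ (X,K)` in the fibre `S(C)_X` and every
`v : (X×K, A) ⟶ (X×K, B)` in the fibre `LS(C)_{X×K}`, one has
`Σ_{(X,J)}({u}*v) ≫ μ^{(X,J)}_{(X,A)} = (F^S(u) ⊗_X id_A) ≫ Σ_{(X,K)} v ≫
μ^{(X,K)}_{(X,A)}` as morphisms `(X, F(J) ⊗ A) ⟶ (X, B)`, where
`{u} = ⟨π₁, u⟩ : X × J ⟶ X × K` is the comprehension of `u`.
-/

open CategoryTheory MonoidalCategory CategoryTheory.CartesianMonoidalCategory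

universe v u v' u'

variable {C : Type u} [Category.{v} C] [CartesianMonoidalCategory C]
  {L : Type u'} [Category.{v'} L] [MonoidalCategory L] [SymmetricCategory L]

variable (F : C ⥤ L) [F.Monoidal]

variable {F}

/-- The identity vertical morphism over `X` in `LS(C)`. -/
def vid (X : C) (A : L) : F.obj X ⊗ A ⟶ A :=
  (weak F X ▷ A) ≫ (λ_ A).hom

/-- Composition of vertical morphisms over `X` in `LS(C)`. -/
def vcomp {X : C} {A B D : L} (u : F.obj X ⊗ A ⟶ B) (v : F.obj X ⊗ B ⟶ D) :
    F.obj X ⊗ A ⟶ D :=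
  (con F X ▷ A) ≫ (α_ (F.obj X) (F.obj X) A).hom ≫ (F.obj X ◁ u) ≫ v

/-- The linear dependent sum `Σ_{(X,J)}` on vertical morphisms: it sends a vertical
morphism `u : (X×J, A) ⟶ (X×J, B)` to the vertical morphism
`(id_X, (id ⊗ c_J ⊗ id) ≫ (σ_{F X, F J} ⊗ id) ≫ (id_{F J} ⊗ (m_{X,J} ⊗ id ≫ u)))`
from `(X, F(J) ⊗ A)` to `(X, F(J) ⊗ B)`. -/
def sigmaMap (X J : C) {A B : L} (u : F.obj (X ⊗ J) ⊗ A ⟶ B) :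
    F.obj X ⊗ (F.obj J ⊗ A) ⟶ F.obj J ⊗ B :=
  (F.obj X ◁ (con F J ▷ A)) ≫ (F.obj X ◁ (α_ (F.obj J) (F.obj J) A).hom) ≫
    (α_ (F.obj X) (F.obj J) (F.obj J ⊗ A)).inv ≫
    ((β_ (F.obj X) (F.obj J)).hom ▷ (F.obj J ⊗ A)) ≫
    (α_ (F.obj J) (F.obj X) (F.obj J ⊗ A)).hom ≫
    (F.obj J ◁ ((α_ (F.obj X) (F.obj J) A).inv ≫
      (Functor.LaxMonoidal.μ F X J ▷ A) ≫ u))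

/-- The reindexing functor `π₁*` along the projection, on vertical morphisms. -/
def piStar (X J : C) {A B : L} (v : F.obj X ⊗ A ⟶ B) :
    F.obj (X ⊗ J) ⊗ A ⟶ B :=
  (F.map (fst X J) ▷ A) ≫ v

/-- The unit `ν` of `Σ_{(X,J)} ⊣ π₁*`:
`(id, (m⁻¹ ⊗ id) ≫ (w_X ⊗ id)) : (X×J, A) ⟶ (X×J, F(J) ⊗ A)`. -/
def nuSigma (X J : C) (A : L) : F.obj (X ⊗ J) ⊗ A ⟶ F.obj J ⊗ A :=
  (Functor.OplaxMonoidal.δ F X J ▷ A) ≫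
    (α_ (F.obj X) (F.obj J) A).hom ≫
    (weak F X ▷ (F.obj J ⊗ A)) ≫ (λ_ (F.obj J ⊗ A)).hom

/-- The counit `μ` of `Σ_{(X,J)} ⊣ π₁*`:
`(id_X, w_X ⊗ w_J ⊗ id) : (X, F(J) ⊗ A) ⟶ (X, A)`. -/
def muSigma (X J : C) (A : L) : F.obj X ⊗ (F.obj J ⊗ A) ⟶ A :=
  (F.obj X ◁ ((weak F J ▷ A) ≫ (λ_ A).hom)) ≫ (weak F X ▷ A) ≫ (λ_ A).hom

/-- The fibrewise tensor product of vertical morphisms over `X`. -/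
def vtensor {X : C} {A A' B B' : L} (u : F.obj X ⊗ A ⟶ A') (v : F.obj X ⊗ B ⟶ B') :
    F.obj X ⊗ (A ⊗ B) ⟶ A' ⊗ B' :=
  (con F X ▷ (A ⊗ B)) ≫ tensorμ (F.obj X) (F.obj X) A B ≫ (u ⊗ₘ v)

/-- Reindexing of a vertical morphism along a morphism of `C`. -/
def reindexVert {X' X : C} (f : X' ⟶ X) {A B : L} (u : F.obj X ⊗ A ⟶ B) :
    F.obj X' ⊗ A ⟶ B :=
  (F.map f ▷ A) ≫ u

open Functor.LaxMonoidal Functor.OplaxMonoidal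

set_option linter.unusedSectionVars false

lemma diag_whiskerRight_toUnit (X : C) : diag X ≫ (toUnit X ▷ X) = (λ_ X).inv := by
  apply hom_ext
  · exact toUnit_unique _ _
  · simp [whiskerRight_snd, leftUnitor_inv_snd]

lemma diag_whiskerLeft_toUnit (X : C) : diag X ≫ (X ◁ toUnit X) = (ρ_ X).inv := by
  apply hom_ext
  · simp [whiskerLeft_fst, rightUnitor_inv_fst]
  · exact toUnit_unique _ _

lemma con_weak_left (X : C) :
    con F X ≫ (weak F X ▷ F.obj X) ≫ (λ_ (F.obj X)).hom = 𝟙 _ := by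
  simp only [con, weak, Category.assoc, comp_whiskerRight]
  rw [δ_natural_left_assoc, left_unitality_hom, ← F.map_comp, ← F.map_comp,
    show diag X ≫ toUnit X ▷ X ≫ (λ_ X).hom = 𝟙 X from by
      rw [← Category.assoc, diag_whiskerRight_toUnit, Iso.inv_hom_id], F.map_id]

lemma con_weak_right (X : C) :
    con F X ≫ (F.obj X ◁ weak F X) ≫ (ρ_ (F.obj X)).hom = 𝟙 _ := by
  simp only [con, weak, Category.assoc, MonoidalCategory.whiskerLeft_comp]
  rw [δ_natural_right_assoc, right_unitality_hom, ← F.map_comp, ← F.map_comp,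
    show diag X ≫ X ◁ toUnit X ≫ (ρ_ X).hom = 𝟙 X from by
      rw [← Category.assoc, diag_whiskerLeft_toUnit, Iso.inv_hom_id], F.map_id]

lemma diag_coassoc (X : C) :
    diag X ≫ (diag X ▷ X) ≫ (α_ X X X).hom = diag X ≫ (X ◁ diag X) := by
  apply hom_ext
  · simp [whiskerRight_fst, whiskerLeft_fst, associator_hom_fst]
  · apply hom_ext
    · simp [associator_hom_snd_fst, whiskerRight_fst, whiskerRight_snd, whiskerLeft_snd]
    · simp [associator_hom_snd_snd, whiskerRight_snd, whiskerLeft_snd]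

lemma con_coassoc (X : C) :
    con F X ≫ (con F X ▷ F.obj X) ≫ (α_ _ _ _).hom = con F X ≫ (F.obj X ◁ con F X) := by
  simp only [con, Category.assoc, comp_whiskerRight, MonoidalCategory.whiskerLeft_comp]
  rw [δ_natural_left_assoc, Functor.OplaxMonoidal.associativity, ← F.map_comp_assoc,
    ← F.map_comp_assoc, Category.assoc, diag_coassoc, F.map_comp_assoc,
    δ_natural_right_assoc]

lemma comprehension_eq (X J K : C) (u : X ⊗ J ⟶ K) :
    (diag X ▷ J) ≫ (α_ X X J).hom ≫ (X ◁ u) = lift (fst X J) u := by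
  apply hom_ext
  · simp [whiskerRight_fst, whiskerLeft_fst, associator_hom_fst, lift_fst]
  · have h : diag X ▷ J ≫ (α_ X X J).hom ≫ snd X (X ⊗ J) = 𝟙 (X ⊗ J) := by
      apply hom_ext
      · simp [associator_hom_snd_fst, whiskerRight_fst]
      · simp [associator_hom_snd_snd, whiskerRight_snd]
    simp only [Category.assoc, whiskerLeft_snd]
    rw [reassoc_of% h]
    simp [lift_snd]

lemma key (X J K : C) (u : X ⊗ J ⟶ K) :
    (con F X ▷ F.obj J) ≫ (α_ (F.obj X) (F.obj X) (F.obj J)).hom ≫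
      (F.obj X ◁ (μ F X J ≫ F.map u)) ≫ μ F X K =
    μ F X J ≫ F.map (lift (fst X J) u) := by
  rw [← comprehension_eq X J K u]
  simp only [MonoidalCategory.whiskerLeft_comp, Category.assoc, μ_natural_right]
  rw [← Functor.LaxMonoidal.associativity_assoc]
  simp only [con, comp_whiskerRight, Category.assoc, Functor.Monoidal.whiskerRight_δ_μ_assoc]
  rw [μ_natural_left_assoc]
  simp only [← F.map_comp, Category.assoc]

lemma lu_pull {Z W M : L} (h : Z ⟶ 𝟙_ L) :
    (α_ Z W M).hom ≫ (h ▷ (W ⊗ M)) ≫ (λ_ (W ⊗ M)).hom =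
      ((h ▷ W) ▷ M) ≫ ((λ_ W).hom ▷ M) := by
  monoidal

lemma ru_pull {P Q M : L} (h : Q ⟶ 𝟙_ L) :
    (α_ P Q M).inv ≫ ((P ◁ h) ▷ M) ≫ ((ρ_ P).hom ▷ M) =
      (P ◁ (h ▷ M)) ≫ (P ◁ (λ_ M).hom) := by
  monoidal

lemma counit_cancel {Z M : L} (c : Z ⟶ Z ⊗ Z) (h : Z ⟶ 𝟙_ L)
    (hc : c ≫ (h ▷ Z) ≫ (λ_ Z).hom = 𝟙 Z) :
    (c ▷ M) ≫ (α_ Z Z M).hom ≫ (h ▷ (Z ⊗ M)) ≫ (λ_ (Z ⊗ M)).hom = 𝟙 (Z ⊗ M) := by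
  rw [lu_pull]
  simp only [← comp_whiskerRight, Category.assoc]
  rw [hc, id_whiskerRight]

lemma con_weak_collapse (X : C) {A' B' : L} (s : F.obj X ⊗ A' ⟶ B') :
    (con F X ▷ A') ≫ (α_ (F.obj X) (F.obj X) A').hom ≫ (F.obj X ◁ s) ≫
      (weak F X ▷ B') ≫ (λ_ B').hom = s := by
  rw [whisker_exchange_assoc, leftUnitor_naturality]
  rw [reassoc_of% counit_cancel (con F X) (weak F X) (con_weak_left X)]

lemma sigmaMap_mu (X J : C) {A B : L} (w : F.obj (X ⊗ J) ⊗ A ⟶ B) :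
    sigmaMap (F := F) X J w ≫ (weak F J ▷ B) ≫ (λ_ B).hom =
      (α_ (F.obj X) (F.obj J) A).inv ≫ (μ F X J ▷ A) ≫ w := by
  simp only [sigmaMap, Category.assoc]
  rw [whisker_exchange_assoc, leftUnitor_naturality]
  rw [reassoc_of% lu_pull (M := F.obj J ⊗ A) (weak F J)]
  have hbeta : (β_ (F.obj X) (F.obj J)).hom ≫ (weak F J ▷ F.obj X) ≫ (λ_ (F.obj X)).hom
      = (F.obj X ◁ weak F J) ≫ (ρ_ (F.obj X)).hom := by
    rw [← BraidedCategory.braiding_naturality_right_assoc, braiding_leftUnitor]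
  have hbeta2 := congrArg (fun t => t ▷ (F.obj J ⊗ A)) hbeta
  simp only [comp_whiskerRight, Category.assoc] at hbeta2
  rw [reassoc_of% hbeta2]
  rw [reassoc_of% ru_pull (M := F.obj J ⊗ A) (weak F J)]
  have h3 := congrArg (fun t => F.obj X ◁ t)
    (counit_cancel (M := A) (con F J) (weak F J) (con_weak_left J))
  simp only [MonoidalCategory.whiskerLeft_comp, MonoidalCategory.whiskerLeft_id,
    Category.assoc] at h3
  rw [reassoc_of% h3]


lemma vcomp_mu (X J : C) {A B : L} (a : F.obj X ⊗ A ⟶ F.obj J ⊗ B) :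
    vcomp (F := F) a (muSigma X J B) = a ≫ (weak F J ▷ B) ≫ (λ_ B).hom := by
  simp only [vcomp, muSigma, Category.assoc]
  rw [← MonoidalCategory.whiskerLeft_comp_assoc]
  rw [con_weak_collapse X (a ≫ (weak F J ▷ B ≫ (λ_ B).hom))]

lemma vtensor_vid (X : C) {Y Z : L} (s : F.obj X ⊗ Y ⟶ Z) (A : L) :
    vtensor (F := F) s (vid X A) = (α_ (F.obj X) Y A).inv ≫ (s ▷ A) := by
  have hrho : con F X ≫ (F.obj X ◁ weak F X) = (ρ_ (F.obj X)).inv := by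
    have := con_weak_right (F := F) X
    rw [← Category.assoc] at this
    exact (Iso.comp_hom_eq_id _).mp this
  have hnat := tensorμ_natural (𝟙 (F.obj X)) (weak F X) (𝟙 Y) (𝟙 A)
  simp only [MonoidalCategory.id_tensorHom_id, MonoidalCategory.id_whiskerRight, id_tensorHom,
    tensorHom_id] at hnat
  have hcoh : ((ρ_ (F.obj X)).inv ▷ (Y ⊗ A)) ≫ tensorμ (F.obj X) (𝟙_ L) Y A ≫
      ((F.obj X ⊗ Y) ◁ (λ_ A).hom) = (α_ (F.obj X) Y A).inv := by
    simp only [tensorμ, braiding_tensorUnit_left]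
    monoidal
  simp only [vtensor, vid]
  rw [tensorHom_def', MonoidalCategory.whiskerLeft_comp]
  simp only [Category.assoc]
  rw [← reassoc_of% hnat]
  rw [← comp_whiskerRight_assoc, hrho]
  rw [reassoc_of% hcoh]

/-- `Σ_{(X,J)}({u}*v) ≫ μ = (F^S(u) ⊗_X id_A) ≫ Σ_{(X,K)}(v) ≫ μ`. -/
theorem sigma_reindex_mu (U : L ⥤ C) (adj : F ⊣ U) (X J K : C) (A B : L)
    (u : X ⊗ J ⟶ K) (v : F.obj (X ⊗ K) ⊗ A ⟶ B) :
    vcomp (sigmaMap (F := F) X J (reindexVert (lift (fst X J) u) v))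
        (muSigma X J B) =
      vcomp
        (vcomp (vtensor (Functor.LaxMonoidal.μ F X J ≫ F.map u) (vid X A))
          (sigmaMap X K v))
        (muSigma X K B) := by
  rw [vcomp_mu, vcomp_mu, reindexVert, sigmaMap_mu]
  simp only [vcomp, Category.assoc]
  rw [sigmaMap_mu]
  rw [vtensor_vid]
  rw [← comp_whiskerRight_assoc, ← key X J K u]
  simp only [comp_whiskerRight, MonoidalCategory.whiskerLeft_comp, Category.assoc]
  monoidal
end
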